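/- Let G be a finite group acting on a finite set X, and let [H_1], …, [H_r] be the distinct conjugacy classes of point stabilizers. For each i set N_i = N_G(H_i), and let [K_{i,1}]_{N_i}, …, [K_{i,r_i}]_{N_i} be the distinct N_i-conjugacy classes of subgroups K that occur as point stabilizers and satisfy H_i < K. Fix, for each i, a point x_i with G_{x_i} = H_i; for each i and j ≤ r_i, a point y_{i,j} with G_{y_{i,j}} = K_{i,j}; and, for each i with at least two G-orbits of points with stabilizer conjugate to H_i, a point x_i' with G_{x_i'} = H_i and Gx_i ≠ Gx_i'. Then the set V = {[x_i ↦ y_{i,j}] : i ≤ r, j ≤ r_i} ∪ {[x_i ↦ x_i'] : i ≤ r with α_i ≥ 2} generates End_G(X) modulo Aut_G(X), where α_i is the number of G-orbits whose point stabilizer is conjugate to H_i. -/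

import Mathlib

/-- The monoid of all `G`-equivariant transformations of `X`, as a submonoid of
`Function.End X` (composition of functions). -/
def gEnd (G X : Type*) [Group G] [MulAction G X] : Submonoid (Function.End X) where
  carrier := {f | ∀ (g : G) (x : X), f (g • x) = g • f x}
  one_mem' := fun _ _ => rfl
  mul_mem' := fun {f₁ f₂} h₁ h₂ g x => by
    show f₁ (f₂ (g • x)) = g • f₁ (f₂ x)
    rw [h₂, h₁]

/-- The group of all bijective `G`-equivariant transformations of `X`, as a subgroup of
`Equiv.Perm X`. -/
def gAut (G X : Type*) [Group G] [MulAction G X] : Subgroup (Equiv.Perm X) where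
  carrier := {f | ∀ (g : G) (x : X), f (g • x) = g • f x}
  one_mem' := fun _ _ => rfl
  mul_mem' := fun {f₁ f₂} h₁ h₂ g x => by
    show f₁ (f₂ (g • x)) = g • f₁ (f₂ x)
    rw [h₂, h₁]
  inv_mem' := fun {f} hf g x => f.injective (by
    rw [hf]; simp)

/-- The conjugate subgroup `g K g⁻¹`. -/
def conjSub {G : Type*} [Group G] (g : G) (K : Subgroup G) : Subgroup G :=
  Subgroup.map (MulAut.conj g).toMonoidHom K

/-- The `N`-conjugacy class `[K]_N = {gKg⁻¹ : g ∈ N}` of a subgroup `K`. -/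
def nConjClass {G : Type*} [Group G] (N K : Subgroup G) : Set (Subgroup G) :=
  {L | ∃ n ∈ N, L = conjSub n K}

/-- The set `O_[H]` of `G`-orbits of `X` whose point stabilizers are conjugate to `H`. -/
def classOrbits (G X : Type*) [Group G] [MulAction G X] (H : Subgroup G) : Set (Set X) :=
  {s | ∃ y : X, (∃ g : G, MulAction.stabilizer G y = conjSub g H) ∧ s = MulAction.orbit G y}

/-- The elements of `Aut_G(X)` viewed as a set of transformations of `X`. -/
def autSet (G X : Type*) [Group G] [MulAction G X] : Set (Function.End X) :=
  (fun e : Equiv.Perm X => (e : X → X)) '' (gAut G X)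

open Classical in
/-- The idempotent-like collapsing map `[x ↦ y]`: it sends `g • x` to `g • y`
and fixes every point outside the orbit of `x`.  (It is well defined as soon as
the stabilizer of `x` is contained in the stabilizer of `y`.) -/
noncomputable def collapse {G X : Type*} [Group G] [MulAction G X] (x y : X) : X → X :=
  fun z => if h : z ∈ MulAction.orbit G x then h.choose • y else z

/-!
Every `G`-equivariant map `f` of a finite `G`-set is a product of automorphisms and collapses
`[a ↦ b]` with `G_a ≤ G_b`. Indeed the image of `f` is `G`-invariant, so either `f` is onto (hence
bijective), or some orbit `Gv` misses it; then `f = [v ↦ f v] ∘ f'` where `f'` agrees with `f`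
off `Gv` and fixes `Gv` pointwise, and `f'` moves fewer points.

A collapse `[a ↦ b]` with `b ∈ Ga` is bijective. Otherwise write `G_a = g H_i g⁻¹`. If
`G_a < G_b`, the `N_G(H_i)`-class of `g⁻¹ G_b g` gives `n ∈ N_G(H_i)` and `j` with
`G_{gn x_i} = G_a` and `G_{gn y_{i,j}} = G_b`; if `G_a = G_b`, the orbits `Ga ≠ Gb` force
`α_i ≥ 2`, and `G_{g x_i} = G_a`, `G_{g x_i'} = G_b`. In both cases an automorphism exchanging
orbits with equal stabilizers conjugates `[a ↦ b]` into a generator `[x_i ↦ t] = [g x_i ↦ g t]`.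
-/

open MulAction

section

variable {G X : Type*} [Group G] [MulAction G X]

theorem smul_mem_orbit_iff {g : G} {z x : X} : g • z ∈ orbit G x ↔ z ∈ orbit G x := by
  rw [← orbit_eq_iff, orbit_smul, orbit_eq_iff]

theorem stabilizer_smul (g : G) (x : X) :
    stabilizer G (g • x) = conjSub g (stabilizer G x) :=
  stabilizer_smul_eq_stabilizer_map_conj g x

theorem stabilizer_smul_lt_stabilizer_smul_iff (g : G) {a b : X} :
    stabilizer G (g • a) < stabilizer G (g • b) ↔ stabilizer G a < stabilizer G b := by
  rw [stabilizer_smul, stabilizer_smul]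
  exact Subgroup.map_lt_map_iff_of_injective (MulAut.conj g).injective

theorem stabilizer_smul_eq_of_mem_normalizer {n : G} {x : X}
    (hn : n ∈ Subgroup.normalizer (stabilizer G x : Set G)) :
    stabilizer G (n • x) = stabilizer G x := by
  ext h
  rw [stabilizer_smul, conjSub, Subgroup.mem_map_equiv, MulAut.conj_symm_apply,
    ← Subgroup.mem_normalizer_iff''.mp hn]

theorem mem_nConjClass_self (N K : Subgroup G) : K ∈ nConjClass N K :=
  ⟨1, N.one_mem, by ext; simp [conjSub]⟩

theorem smul_eq_smul_of_stabilizer_le {x y : X} (h : stabilizer G x ≤ stabilizer G y) {c g : G}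
    (hcg : c • x = g • x) : c • y = g • y := by
  have : g⁻¹ * c ∈ stabilizer G y := h (by rw [mem_stabilizer_iff, mul_smul, hcg, inv_smul_smul])
  rwa [mem_stabilizer_iff, mul_smul, inv_smul_eq_iff] at this

section Collapse

variable {x y z : X}

theorem collapse_smul (h : stabilizer G x ≤ stabilizer G y) (g : G) :
    collapse (G := G) x y (g • x) = g • y := by
  have hmem : g • x ∈ orbit G x := mem_orbit x g
  rw [collapse, dif_pos hmem]
  exact smul_eq_smul_of_stabilizer_le h hmem.choose_spec

theorem collapse_self (h : stabilizer G x ≤ stabilizer G y) : collapse (G := G) x y x = y := by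
  simpa using collapse_smul h (1 : G)

theorem collapse_of_notMem (hz : z ∉ orbit G x) : collapse (G := G) x y z = z := by
  rw [collapse, dif_neg hz]

theorem collapse_mem_gEnd (h : stabilizer G x ≤ stabilizer G y) :
    (collapse (G := G) x y : Function.End X) ∈ gEnd G X := by
  intro g z
  by_cases hz : z ∈ orbit G x
  · obtain ⟨c, rfl⟩ := hz
    rw [smul_smul, collapse_smul h, collapse_smul h, smul_smul]
  · rw [collapse_of_notMem hz, collapse_of_notMem (smul_mem_orbit_iff.not.mpr hz)]

theorem collapse_smul_smul (h : stabilizer G x ≤ stabilizer G y) (g : G) :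
    collapse (G := G) (g • x) (g • y) = collapse (G := G) x y := by
  have h' : stabilizer G (g • x) ≤ stabilizer G (g • y) := by
    rw [stabilizer_smul, stabilizer_smul]
    exact Subgroup.map_mono h
  funext z
  by_cases hz : z ∈ orbit G x
  · obtain ⟨c, rfl⟩ := hz
    have hc : c • x = (c * g⁻¹) • g • x := by rw [smul_smul, inv_mul_cancel_right]
    show collapse (g • x) (g • y) (c • x) = collapse x y (c • x)
    rw [hc, collapse_smul h', ← hc, collapse_smul h, smul_smul, inv_mul_cancel_right]
  · rw [collapse_of_notMem hz, collapse_of_notMem (by rwa [orbit_smul])]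

theorem collapse_surjective {a b : X} (h : stabilizer G a ≤ stabilizer G b) (hb : b ∈ orbit G a) :
    Function.Surjective (collapse (G := G) a b) := by
  intro z
  by_cases hz : z ∈ orbit G a
  · obtain ⟨c, rfl⟩ := hz
    obtain ⟨d, rfl⟩ := hb
    exact ⟨(c * d⁻¹) • a, by rw [collapse_smul h, smul_smul, inv_mul_cancel_right]⟩
  · exact ⟨z, collapse_of_notMem hz⟩

/-- On a finite orbit the surjective collapse `[a ↦ b]` is injective, so it cannot identify
`a` with `g • a` for `g ∈ G_b \ G_a`. -/
theorem notMem_orbit_of_stabilizer_lt [Finite X] {a b : X}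
    (h : stabilizer G a < stabilizer G b) : b ∉ orbit G a := by
  intro hb
  obtain ⟨g, hgb, hga⟩ := SetLike.exists_of_lt h
  have hinj := Finite.injective_iff_surjective.mpr (collapse_surjective h.le hb)
  refine hga (mem_stabilizer_iff.mpr (hinj ?_))
  rw [collapse_smul h.le, collapse_self h.le, mem_stabilizer_iff.mp hgb]

end Collapse

theorem stabilizer_le_stabilizer_apply {f : Function.End X} (hf : f ∈ gEnd G X) (z : X) :
    stabilizer G z ≤ stabilizer G (f z) := fun g hg => by
  rw [mem_stabilizer_iff] at hg ⊢
  rw [← hf g z, hg]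

open Classical in
theorem piecewise_orbit_mem_gEnd (v : X) {f₁ f₂ : X → X} (h₁ : (f₁ : Function.End X) ∈ gEnd G X)
    (h₂ : (f₂ : Function.End X) ∈ gEnd G X) :
    ((orbit G v).piecewise f₁ f₂ : Function.End X) ∈ gEnd G X := by
  intro g z
  by_cases hz : z ∈ orbit G v
  · simp only [Set.piecewise, hz, smul_mem_orbit_iff, if_true]
    exact h₁ g z
  · simp only [Set.piecewise, hz, smul_mem_orbit_iff, if_false]
    exact h₂ g z

theorem stabilizer_apply_of_mem_gAut {σ : Equiv.Perm X} (hσ : σ ∈ gAut G X) (z : X) :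
    stabilizer G (σ z) = stabilizer G z := by
  ext g
  rw [mem_stabilizer_iff, mem_stabilizer_iff, ← hσ g z, σ.apply_eq_iff_eq]

theorem apply_mem_orbit_apply_iff {σ : Equiv.Perm X} (hσ : σ ∈ gAut G X) {z a : X} :
    σ z ∈ orbit G (σ a) ↔ z ∈ orbit G a := by
  constructor
  · rintro ⟨g, hg⟩
    exact ⟨g, σ.injective (by rw [hσ]; exact hg)⟩
  · rintro ⟨g, rfl⟩
    exact ⟨g, (hσ g a).symm⟩

theorem collapse_apply_apply {σ : Equiv.Perm X} (hσ : σ ∈ gAut G X) {a b : X}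
    (h : stabilizer G a ≤ stabilizer G b) (z : X) :
    collapse (G := G) (σ a) (σ b) (σ z) = σ (collapse (G := G) a b z) := by
  by_cases hz : z ∈ orbit G a
  · have h' : stabilizer G (σ a) ≤ stabilizer G (σ b) := by
      rwa [stabilizer_apply_of_mem_gAut hσ, stabilizer_apply_of_mem_gAut hσ]
    obtain ⟨c, rfl⟩ := hz
    rw [hσ, collapse_smul h', collapse_smul h, hσ]
  · rw [collapse_of_notMem hz, collapse_of_notMem ((apply_mem_orbit_apply_iff hσ).not.mpr hz)]

theorem mem_autSet_of_surjective [Finite X] {f : Function.End X} (hf : f ∈ gEnd G X)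
    (hs : Function.Surjective f) : f ∈ autSet G X :=
  ⟨Equiv.ofBijective f ⟨Finite.injective_iff_surjective.mpr hs, hs⟩, hf, rfl⟩

section OrbitSwap

open Classical in
noncomputable def orbitSwap (u w : X) : X → X :=
  (orbit G u).piecewise (collapse (G := G) u w) (collapse (G := G) w u)

variable {u w z : X}

theorem orbitSwap_self (h : stabilizer G u ≤ stabilizer G w) : orbitSwap (G := G) u w u = w := by
  simp only [orbitSwap, Set.piecewise, mem_orbit_self, if_true, collapse_self h]

theorem orbitSwap_of_notMem (hu : z ∉ orbit G u) (hw : z ∉ orbit G w) :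
    orbitSwap (G := G) u w z = z := by
  simp only [orbitSwap, Set.piecewise, hu, if_false, collapse_of_notMem hw]

theorem orbitSwap_orbitSwap (h : stabilizer G u = stabilizer G w) (z : X) :
    orbitSwap (G := G) w u (orbitSwap (G := G) u w z) = z := by
  by_cases hu : z ∈ orbit G u
  · obtain ⟨c, rfl⟩ := hu
    simp only [orbitSwap, Set.piecewise, mem_orbit, if_true, collapse_smul h.le,
      collapse_smul h.ge]
  by_cases hw : z ∈ orbit G w
  · obtain ⟨c, rfl⟩ := hw
    have hcw : c • w ∉ orbit G u := hu
    have hcu : c • u ∉ orbit G w := fun hc =>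
      hcw (smul_mem_orbit_iff.mpr (mem_orbit_symm.mp (smul_mem_orbit_iff.mp hc)))
    simp only [orbitSwap, Set.piecewise, hcw, hcu, if_false, collapse_smul h.le,
      collapse_smul h.ge]
  · rw [orbitSwap_of_notMem hu hw, orbitSwap_of_notMem hw hu]

theorem exists_mem_gAut_apply_eq (h : stabilizer G u = stabilizer G w) :
    ∃ σ ∈ gAut G X, σ u = w ∧ ∀ z, z ∉ orbit G u → z ∉ orbit G w → σ z = z :=
  ⟨⟨orbitSwap u w, orbitSwap w u, orbitSwap_orbitSwap h, orbitSwap_orbitSwap h.symm⟩,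
    piecewise_orbit_mem_gEnd u (collapse_mem_gEnd h.le) (collapse_mem_gEnd h.ge),
    orbitSwap_self h.le, fun _ => orbitSwap_of_notMem⟩

theorem exists_mem_gAut_apply_eq_apply_eq {a b p q : X} (hb : b ∉ orbit G a)
    (hq : q ∉ orbit G p) (hap : stabilizer G a = stabilizer G p)
    (hbq : stabilizer G b = stabilizer G q) :
    ∃ σ ∈ gAut G X, σ a = p ∧ σ b = q := by
  obtain ⟨σ₁, hσ₁, rfl, -⟩ := exists_mem_gAut_apply_eq hap
  obtain ⟨σ₂, hσ₂, hσ₂b, hσ₂fix⟩ :=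
    exists_mem_gAut_apply_eq ((stabilizer_apply_of_mem_gAut hσ₁ b).trans hbq)
  refine ⟨σ₂ * σ₁, mul_mem hσ₂ hσ₁, hσ₂fix _ ?_ ?_, hσ₂b⟩
  · exact (apply_mem_orbit_apply_iff hσ₁).not.mpr (mem_orbit_symm.not.mpr hb)
  · exact mem_orbit_symm.not.mpr hq

end OrbitSwap

theorem collapse_mem_of_stabilizer_eq_smul {S : Submonoid (Function.End X)}
    (haut : autSet G X ⊆ S) {a b x t : X} (hab : stabilizer G a ≤ stabilizer G b)
    (hb : b ∉ orbit G a) (hxt : stabilizer G x ≤ stabilizer G t) (ht : t ∉ orbit G x) (g : G)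
    (hax : stabilizer G a = stabilizer G (g • x)) (hbt : stabilizer G b = stabilizer G (g • t))
    (hmem : (collapse (G := G) x t : Function.End X) ∈ S) :
    (collapse (G := G) a b : Function.End X) ∈ S := by
  obtain ⟨σ, hσ, hσa, hσb⟩ := exists_mem_gAut_apply_eq_apply_eq hb
    (by rwa [orbit_smul, smul_mem_orbit_iff]) hax hbt
  have hconj : collapse (G := G) a b = ⇑σ⁻¹ ∘ collapse (G := G) x t ∘ ⇑σ := by
    funext z
    rw [Function.comp_apply, Function.comp_apply, ← collapse_smul_smul hxt g, ← hσa, ← hσb,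
      collapse_apply_apply hσ hab]
    exact (σ.symm_apply_apply _).symm
  rw [hconj]
  exact mul_mem (haut ⟨σ⁻¹, inv_mem hσ, rfl⟩) (mul_mem hmem (haut ⟨σ, hσ, rfl⟩))

theorem exists_orbit_disjoint_range {f : Function.End X} (hf : f ∈ gEnd G X)
    (hs : ¬Function.Surjective f) : ∃ v : X, ∀ z, f z ∉ orbit G v := by
  obtain ⟨v, hv⟩ := not_forall.mp hs
  refine ⟨v, fun z ⟨g, hg⟩ => hv ⟨g⁻¹ • z, ?_⟩⟩
  rw [hf, ← hg, inv_smul_smul]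

open Classical in
theorem eq_collapse_comp_piecewise {f : X → X} (hf : (f : Function.End X) ∈ gEnd G X) {v : X}
    (hv : ∀ z, f z ∉ orbit G v) :
    f = collapse (G := G) v (f v) ∘ (orbit G v).piecewise id f := by
  funext z
  rw [Function.comp_apply]
  by_cases hz : z ∈ orbit G v
  · obtain ⟨c, rfl⟩ := hz
    rw [Set.piecewise_eq_of_mem _ _ _ (mem_orbit v c), id,
      collapse_smul (stabilizer_le_stabilizer_apply hf v), hf]
  · rw [Set.piecewise_eq_of_notMem _ _ _ hz, collapse_of_notMem (hv z)]

open Classical in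
theorem ncard_moved_piecewise_lt [Finite X] {f : X → X} {v : X} (hv : f v ∉ orbit G v) :
    {z | (orbit G v).piecewise id f z ≠ z}.ncard < {z | f z ≠ z}.ncard := by
  refine Set.ncard_lt_ncard ((Set.ssubset_iff_of_subset fun z hz => ?_).mpr ⟨v, ?_, ?_⟩)
  · by_cases h : z ∈ orbit G v <;> simp_all
  · exact fun h => hv (by rw [h]; exact mem_orbit_self v)
  · simp [mem_orbit_self]

theorem gEnd_le_of_collapse_mem [Finite X] {S : Submonoid (Function.End X)}
    (haut : autSet G X ⊆ S)
    (hcollapse : ∀ a b : X, stabilizer G a ≤ stabilizer G b →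
      (collapse (G := G) a b : Function.End X) ∈ S) :
    gEnd G X ≤ S := by
  intro f hf
  obtain ⟨n, hn⟩ : ∃ n, {z | f z ≠ z}.ncard = n := ⟨_, rfl⟩
  induction n using Nat.strong_induction_on generalizing f with
  | _ n ih =>
  by_cases hs : Function.Surjective f
  · exact haut (mem_autSet_of_surjective hf hs)
  obtain ⟨v, hv⟩ := exists_orbit_disjoint_range hf hs
  rw [eq_collapse_comp_piecewise hf hv]
  refine mul_mem (hcollapse v (f v) (stabilizer_le_stabilizer_apply hf v)) (ih _ ?_ ?_ rfl)
  · exact hn ▸ ncard_moved_piecewise_lt (hv v)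
  · exact piecewise_orbit_mem_gEnd v (one_mem _) hf

theorem closure_union_autSet_eq_gEnd [Finite X] {V : Set (Function.End X)}
    (hV : V ⊆ gEnd G X)
    (hcollapse : ∀ a b : X, stabilizer G a ≤ stabilizer G b → b ∉ orbit G a →
      (collapse (G := G) a b : Function.End X) ∈ Submonoid.closure (V ∪ autSet G X)) :
    Submonoid.closure (V ∪ autSet G X) = gEnd G X := by
  have haut : autSet G X ⊆ Submonoid.closure (V ∪ autSet G X) :=
    Set.subset_union_right.trans Submonoid.subset_closure
  refine le_antisymm (Submonoid.closure_le.mpr (Set.union_subset hV ?_))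
    (gEnd_le_of_collapse_mem haut fun a b hab => ?_)
  · rintro _ ⟨σ, hσ, rfl⟩
    exact hσ
  by_cases hb : b ∈ orbit G a
  · exact haut (mem_autSet_of_surjective (collapse_mem_gEnd hab) (collapse_surjective hab hb))
  · exact hcollapse a b hab hb

theorem two_le_ncard_classOrbits [Finite X] {K : Subgroup G} {a b : X} {g : G}
    (ha : stabilizer G a = conjSub g K) (hab : stabilizer G a = stabilizer G b)
    (hb : b ∉ orbit G a) : 2 ≤ (classOrbits G X K).ncard :=
  (Set.one_lt_ncard_iff (Set.toFinite _)).mpr ⟨orbit G a, orbit G b, ⟨a, ⟨g, ha⟩, rfl⟩,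
    ⟨b, ⟨g, hab ▸ ha⟩, rfl⟩, fun h => hb (h ▸ mem_orbit_self b)⟩

end

theorem stmt11_general {G X : Type*} [Group G] [MulAction G X] [Finite X]
    (r : ℕ) (H : Fin r → Subgroup G)
    (hH2 : ∀ x : X, ∃! i, ∃ g : G, MulAction.stabilizer G x = conjSub g (H i))
    (J : Fin r → Type) (y : (i : Fin r) → J i → X)
    (hy1 : ∀ i j, H i < MulAction.stabilizer G (y i j))
    (hy3 : ∀ (i : Fin r) (z : X), H i < MulAction.stabilizer G z →
      ∃ j, nConjClass (Subgroup.normalizer (H i : Set G)) (MulAction.stabilizer G z) =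
        nConjClass (Subgroup.normalizer (H i : Set G)) (MulAction.stabilizer G (y i j)))
    (x : Fin r → X) (hx : ∀ i, MulAction.stabilizer G (x i) = H i)
    (x' : Fin r → X)
    (hx' : ∀ i, 2 ≤ (classOrbits G X (H i)).ncard →
      MulAction.stabilizer G (x' i) = H i ∧
      MulAction.orbit G (x' i) ≠ MulAction.orbit G (x i)) :
    Submonoid.closure
      (({f : Function.End X | ∃ i j, f = collapse (G := G) (x i) (y i j)} ∪
        {f : Function.End X | ∃ i, 2 ≤ (classOrbits G X (H i)).ncard ∧
          f = collapse (G := G) (x i) (x' i)}) ∪ autSet G X) = gEnd G X := by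
  refine closure_union_autSet_eq_gEnd ?_ fun a b hab hb => ?_
  · rintro f (⟨i, j, rfl⟩ | ⟨i, hi, rfl⟩)
    · exact collapse_mem_gEnd ((hx i).trans_le (hy1 i j).le)
    · exact collapse_mem_gEnd ((hx i).trans (hx' i hi).1.symm).le
  obtain ⟨i, ⟨g, hg⟩, -⟩ := hH2 a
  have hga : stabilizer G a = stabilizer G (g • x i) := by rw [hg, stabilizer_smul, hx i]
  rcases hab.lt_or_eq with hlt | heq
  · have hHb : H i < stabilizer G (g⁻¹ • b) := by
      rwa [← hx i, ← stabilizer_smul_lt_stabilizer_smul_iff g, smul_inv_smul, ← hga]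
    obtain ⟨j, hj⟩ := hy3 i _ hHb
    obtain ⟨n, hn, hbn⟩ := hj ▸ mem_nConjClass_self _ _
    rw [← stabilizer_smul] at hbn
    refine collapse_mem_of_stabilizer_eq_smul
      (Set.subset_union_right.trans Submonoid.subset_closure) hab hb ((hx i).trans_le (hy1 i j).le)
      (notMem_orbit_of_stabilizer_lt ((hx i).trans_lt (hy1 i j))) (g * n) ?_ ?_
      (Submonoid.subset_closure (Or.inl (Or.inl ⟨i, j, rfl⟩)))
    · rw [hga, mul_smul, stabilizer_smul g (n • x i), stabilizer_smul g (x i),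
        stabilizer_smul_eq_of_mem_normalizer ((hx i).symm ▸ hn)]
    · rw [mul_smul, stabilizer_smul g (n • y i j), ← hbn, ← stabilizer_smul, smul_inv_smul]
  · have hi := two_le_ncard_classOrbits hg heq hb
    obtain ⟨hx'i, hne⟩ := hx' i hi
    refine collapse_mem_of_stabilizer_eq_smul
      (Set.subset_union_right.trans Submonoid.subset_closure) hab hb (hx'i.trans (hx i).symm).ge
      (mt orbit_eq_iff.mpr hne) g hga ?_
      (Submonoid.subset_closure (Or.inl (Or.inr ⟨i, hi, rfl⟩)))
    rw [← heq, hga, stabilizer_smul, stabilizer_smul, hx i, hx'i]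

/-- The specific set `V` of collapsing maps
`[x_i ↦ y_{i,j}]` and `[x_i ↦ x_i']` generates `End_G(X)` modulo `Aut_G(X)`. -/
theorem stmt11 {G X : Type*} [Group G] [MulAction G X] [Finite G] [Finite X]
    (r : ℕ) (H : Fin r → Subgroup G)
    (hH1 : ∀ i, ∃ x : X, MulAction.stabilizer G x = H i)
    (hH2 : ∀ x : X, ∃! i, ∃ g : G, MulAction.stabilizer G x = conjSub g (H i))
    (J : Fin r → Type) (y : (i : Fin r) → J i → X)
    (hy1 : ∀ i j, H i < MulAction.stabilizer G (y i j))
    (hy2 : ∀ i j j',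
      nConjClass (Subgroup.normalizer (H i : Set G)) (MulAction.stabilizer G (y i j)) =
        nConjClass (Subgroup.normalizer (H i : Set G)) (MulAction.stabilizer G (y i j')) → j = j')
    (hy3 : ∀ (i : Fin r) (z : X), H i < MulAction.stabilizer G z →
      ∃ j, nConjClass (Subgroup.normalizer (H i : Set G)) (MulAction.stabilizer G z) =
        nConjClass (Subgroup.normalizer (H i : Set G)) (MulAction.stabilizer G (y i j)))
    (x : Fin r → X) (hx : ∀ i, MulAction.stabilizer G (x i) = H i)
    (x' : Fin r → X)
    (hx' : ∀ i, 2 ≤ (classOrbits G X (H i)).ncard →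
      MulAction.stabilizer G (x' i) = H i ∧
      MulAction.orbit G (x' i) ≠ MulAction.orbit G (x i)) :
    Submonoid.closure
      (({f : Function.End X | ∃ i j, f = collapse (G := G) (x i) (y i j)} ∪
        {f : Function.End X | ∃ i, 2 ≤ (classOrbits G X (H i)).ncard ∧
          f = collapse (G := G) (x i) (x' i)}) ∪ autSet G X) = gEnd G X :=
  stmt11_general r H hH2 J y hy1 hy3 x hx x' hx'
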